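/- For hypergraphs H = ({1,…,n}, E) and H' = ({1,…,m}, E'): H ⪯ H' (there is a quotient map from H' to H) if and only if f_H ≤ f_{H'} (f_H is a simple minor of f_{H'}). -/

import Mathlib

open Classical

/-- Boolean functions of arity `n` over GF(2). -/
abbrev BFn (n : ℕ) := (Fin n → ZMod 2) → ZMod 2

/-- Boolean functions of arbitrary arity. -/
abbrev BF := Σ n : ℕ, BFn n

/-- `g` is a simple minor of `f`. -/
def Minor {m n : ℕ} (g : BFn m) (f : BFn n) : Prop :=
  ∃ σ : Fin n → Fin m, ∀ a : Fin m → ZMod 2, g a = f (fun i => a (σ i))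

def MinorS (G F : BF) : Prop := Minor G.2 F.2

def EquivS (G F : BF) : Prop := MinorS G F ∧ MinorS F G

def StrictMinorS (G F : BF) : Prop := MinorS G F ∧ ¬ MinorS F G

/-- `x i` is an essential variable of `f`. -/
def Essential {n : ℕ} (f : BFn n) (i : Fin n) : Prop :=
  ∃ a b : Fin n → ZMod 2, (∀ j, j ≠ i → a j = b j) ∧ f a ≠ f b

noncomputable def essArity {n : ℕ} (f : BFn n) : ℕ :=
  (Finset.univ.filter fun i => Essential f i).card

noncomputable def essS (F : BF) : ℕ := essArity F.2

/-- `f_{i=j}` : identify variable `i` with variable `j`. -/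
def identify {n : ℕ} (f : BFn n) (i j : Fin n) : BFn n :=
  fun a => f (fun t => if t = i then a j else a t)

/-- `G` is a lower cover of `F` in the poset of equivalence classes. -/
def LowerCover (G F : BF) : Prop :=
  StrictMinorS G F ∧ ¬ ∃ H : BF, StrictMinorS G H ∧ StrictMinorS H F

/-- `F` is join-irreducible: some strict minor dominates all strict minors. -/
def JoinIrred (F : BF) : Prop :=
  ∃ F' : BF, StrictMinorS F' F ∧ ∀ G : BF, StrictMinorS G F → MinorS G F'

noncomputable def arityGap (F : BF) : ℕ :=
  sInf {d : ℕ | ∃ G : BF, StrictMinorS G F ∧ d = essS F - essS G}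

/-- Hypergraphs on vertex set `Fin n`. -/
abbrev HG (n : ℕ) := Finset (Finset (Fin n))

abbrev HGS := Σ n : ℕ, HG n

/-- `h` is a quotient map from `(Fin m, E')` to `(Fin n, E)`. -/
def IsQuotientMap {m n : ℕ} (E' : HG m) (E : HG n) (h : Fin m → Fin n) : Prop :=
  ∀ S : Finset (Fin n), S ∈ E ↔ Odd (E'.filter (fun T => T.image h = S)).card

/-- `H ⪯ H'` : there is a quotient map from `H'` to `H`. -/
def MinorH (H H' : HGS) : Prop :=
  ∃ h : Fin H'.1 → Fin H.1, IsQuotientMap H'.2 H.2 h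

/-- The hypergraph `H_{h'}` determined by a hypergraph and a map. -/
noncomputable def quotientHG {m n : ℕ} (E' : HG m) (h : Fin m → Fin n) : HG n :=
  Finset.univ.filter fun S => Odd (E'.filter (fun T => T.image h = S)).card

/-- The Boolean function of a hypergraph: evaluation of `Σ_{E} Π_{i ∈ E} x_i`. -/
def fHG {n : ℕ} (E : HG n) : BFn n :=
  fun a => ∑ S ∈ E, ∏ i ∈ S, a i

/-- A Steiner system (`2-(n,k,1)` design). -/
def IsSteiner {n : ℕ} (k : ℕ) (E : HG n) : Prop :=
  (∀ S ∈ E, S.card = k) ∧ ∀ i j : Fin n, i ≠ j → ∃! S, S ∈ E ∧ i ∈ S ∧ j ∈ S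

/-- Vertex set of the identification hypergraph `H_e`, `e = {i,j}`:
`(V \ e) ∪ {l_e}` where `none` plays the role of the new vertex `l_e`. -/
abbrev IdVert {n : ℕ} (i j : Fin n) := Option {x : Fin n // x ≠ i ∧ x ≠ j}

/-- The underlying subset of `V` of a set of vertices of `H_e` (ignoring `l_e`). -/
def baseSet {n : ℕ} {i j : Fin n} (E : Finset (IdVert i j)) : Finset (Fin n) :=
  E.biUnion fun o => o.elim ∅ fun x => {x.val}

/-- Exactly one or all three of `p`, `q`, `r` hold. -/
def OneOrAllThree (p q r : Prop) : Prop :=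
  (p ∧ ¬q ∧ ¬r) ∨ (¬p ∧ q ∧ ¬r) ∨ (¬p ∧ ¬q ∧ r) ∨ (p ∧ q ∧ r)

/-- The hyperedges of the identification hypergraph `H_e`, `e = {i,j}`. -/
noncomputable def idEdges {n : ℕ} (𝓔 : HG n) (i j : Fin n) :
    Finset (Finset (IdVert i j)) :=
  Finset.univ.filter fun E =>
    (none ∉ E ∧ baseSet E ∈ 𝓔) ∨
    (none ∈ E ∧ OneOrAllThree (insert i (insert j (baseSet E)) ∈ 𝓔)
      (insert i (baseSet E) ∈ 𝓔) (insert j (baseSet E) ∈ 𝓔))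

/-- The hyperedges of the induced hypergraph `H_{-e}` on `V \ e`, `e = {i,j}`. -/
noncomputable def minusEdges {n : ℕ} (𝓔 : HG n) (i j : Fin n) :
    Finset (Finset {x : Fin n // x ≠ i ∧ x ≠ j}) :=
  Finset.univ.filter fun E => E.image Subtype.val ∈ 𝓔

/-- `φ` is an isomorphism of hypergraphs. -/
def IsHGIso {α β : Type*} (𝓐 : Finset (Finset α)) (𝓑 : Finset (Finset β))
    (φ : α ≃ β) : Prop :=
  ∀ E : Finset α, E ∈ 𝓐 ↔ E.image φ ∈ 𝓑

/-- The (loopless) graph associated with a set of 2-element edges. -/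
def graphOf {n : ℕ} (𝓔 : HG n) : SimpleGraph (Fin n) where
  Adj v w := v ≠ w ∧ ({v, w} : Finset (Fin n)) ∈ 𝓔
  symm := by
    refine ⟨?_⟩
    intro v w h
    exact ⟨h.1.symm, by rw [Finset.pair_comm]; exact h.2⟩
  loopless := by
    refine ⟨?_⟩
    intro v h
    exact h.1 rfl

/-! Precomposing `f_{H'}` with a map `h` merges monomials with the same image under `h`
(variables over GF(2) are idempotent), so `f_{H'} ∘ h = f_{H'_h}` for the quotient hypergraph
`H'_h`. Since distinct hypergraphs give distinct functions (the multilinear representation over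
GF(2) is unique), `f_H = f_{H'} ∘ h` holds exactly when `H = H'_h`, i.e. when `h` is a quotient map. -/

open Finset

theorem Finset.prod_comp_of_isIdempotentElem {ι κ M : Type*} [CommMonoid M] [DecidableEq κ]
    (s : Finset ι) (f : κ → M) (g : ι → κ) (hf : ∀ b, IsIdempotentElem (f b)) :
    ∏ a ∈ s, f (g a) = ∏ b ∈ s.image g, f b := by
  rw [prod_comp]
  refine prod_congr rfl fun b hb => (hf b).pow_eq ?_
  obtain ⟨a, ha, rfl⟩ := mem_image.mp hb
  exact card_ne_zero.mpr ⟨a, mem_filter.mpr ⟨ha, rfl⟩⟩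

theorem isIdempotentElem_zmod_two (x : ZMod 2) : IsIdempotentElem x := by
  fin_cases x <;> rfl

theorem ZMod.natCast_mul_eq_ite_odd (k : ℕ) (x : ZMod 2) :
    (k : ZMod 2) * x = if Odd k then x else 0 := by
  split_ifs with hk
  · rw [ZMod.natCast_eq_one_iff_odd.mpr hk, one_mul]
  · rw [ZMod.natCast_eq_zero_iff_even.mpr (Nat.not_odd_iff_even.mp hk), zero_mul]

theorem isQuotientMap_iff {m n : ℕ} (E' : HG m) (E : HG n) (h : Fin m → Fin n) :
    IsQuotientMap E' E h ↔ quotientHG E' h = E := by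
  simp only [IsQuotientMap, quotientHG, Finset.ext_iff, mem_filter, mem_univ,
    true_and, iff_comm]

theorem fHG_comp {m n : ℕ} (E' : HG m) (h : Fin m → Fin n) (a : Fin n → ZMod 2) :
    fHG E' (fun i => a (h i)) = fHG (quotientHG E' h) a := by
  calc fHG E' (fun i => a (h i))
      = ∑ T ∈ E', ∏ j ∈ T.image h, a j :=
        sum_congr rfl fun T _ =>
          T.prod_comp_of_isIdempotentElem a h fun _ => isIdempotentElem_zmod_two _
    _ = ∑ S, ∑ T ∈ E' with T.image h = S, ∏ j ∈ S, a j := by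
        rw [← sum_fiberwise_of_maps_to (fun T _ => mem_univ (T.image h))]
        refine sum_congr rfl fun S _ => sum_congr rfl fun T hT => ?_
        rw [(mem_filter.mp hT).2]
    _ = ∑ S, if Odd #{T ∈ E' | T.image h = S} then ∏ j ∈ S, a j else 0 := by
        simp only [sum_const, nsmul_eq_mul, ZMod.natCast_mul_eq_ite_odd]
    _ = fHG (quotientHG E' h) a := by
        rw [← sum_filter]; rfl

theorem fHG_indicator {n : ℕ} (E : HG n) (S : Finset (Fin n)) :
    fHG E (fun i => if i ∈ S then 1 else 0) = ∑ T ∈ S.powerset, if T ∈ E then 1 else 0 := by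
  simp only [fHG, prod_boole, ← subset_iff, ← mem_powerset, sum_ite_mem, inter_comm]

/-- By strong induction: `S ∈ E` is recovered from `f_E(1_S)` and the proper subsets of `S`. -/
theorem fHG_injective {n : ℕ} : Function.Injective (fHG : HG n → BFn n) := by
  intro E₁ E₂ heq
  ext S
  induction S using Finset.strongInduction with
  | H S ih =>
    have hsum := congrFun heq (fun i => if i ∈ S then 1 else 0)
    rw [fHG_indicator, fHG_indicator, ← add_sum_erase _ _ (mem_powerset_self S),
      ← add_sum_erase _ _ (mem_powerset_self S)] at hsum
    have hproper : ∀ T ∈ S.powerset.erase S,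
        (if T ∈ E₁ then 1 else 0 : ZMod 2) = if T ∈ E₂ then 1 else 0 := fun T hT =>
      if_congr (ih T (mem_ssubsets.mp hT)) rfl rfl
    rw [sum_congr rfl hproper] at hsum
    have hS := add_right_cancel hsum
    by_cases h₁ : S ∈ E₁ <;> by_cases h₂ : S ∈ E₂ <;> simp_all

/-- `H ⪯ H'` iff `f_H ≤ f_{H'}`. -/
theorem stmt13 (H H' : HGS) : MinorH H H' ↔ Minor (fHG H.2) (fHG H'.2) := by
  refine exists_congr fun h => ?_
  simp only [isQuotientMap_iff, fHG_comp, ← funext_iff, fHG_injective.eq_iff, eq_comm]
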